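/- Let w ∈ V_G be a root in G' with layer sequence {X_i}. Then, with probability at least 1 − polylog(n)/n³, the total size of the tree rooted at w satisfies Σ_i X_i = O(log n · log log n). -/

import Mathlib

/-!
STATEMENT 7 (Lemma 6, tree bound).

Setting as in Lemma 2 (layers `L_i`, `X_i = |L_i|` of the tree of `G'` rooted at a
good node `w`).  Claim: with probability at least `1 - polylog(n)/n³`, the total size
of the tree rooted at `w` satisfies `Σ_i X_i = O(log n · log log n)`.

(The layers are pairwise disjoint subsets of `Fin n`, so `L_i = ∅` for `i > n + 1`
and the sum over `i ≤ n + 1` is the full sum `Σ_i X_i`.)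
-/

open scoped Classical
open Finset

noncomputable section

/-- `lg` denotes the base-2 logarithm (the paper's `log`). -/
def lg (x : ℝ) : ℝ := Real.logb 2 x

abbrev NodeOrder (n : ℕ) (d : Fin n) : Type := Fin (n - 1) ≃ {v : Fin n // v ≠ d}

def unifProb {Ω : Type*} [Fintype Ω] (P : Ω → Prop) : ℝ :=
  ((Finset.univ : Finset Ω).filter P).card / (Fintype.card Ω : ℝ)

def firstElem {n : ℕ} {d : Fin n} (π : NodeOrder n d) : Fin n :=
  if h : 0 < n - 1 then (π ⟨0, h⟩).1 else d

def succG {n : ℕ} {d : Fin n} (VB : Finset (Fin n))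
    (ω : Fin n → NodeOrder n d) (v : Fin n) : Fin n :=
  if v ∈ VB then firstElem (ω v) else v

def layerAux {n : ℕ} (VB : Finset (Fin n)) (f : Fin n → Fin n) (w : Fin n) :
    ℕ → Finset (Fin n) × Finset (Fin n)
  | 0 => ({w}, {w})
  | i + 1 =>
      let p := layerAux VB f w i
      let L := VB.filter fun v => f v ∈ p.1 ∧ v ∉ p.2
      (L, p.2 ∪ L)

def layer {n : ℕ} (VB : Finset (Fin n)) (f : Fin n → Fin n) (w : Fin n) (i : ℕ) :
    Finset (Fin n) :=
  (layerAux VB f w i).1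

/-!
The tree of `w` is the set `T` of nodes lying in some layer. With `f` the parent map, every bad
node `v` satisfies `f v ∈ T ↔ v ∈ T`. For a fixed candidate `T = insert w K`, `K ⊆ V_B`,
`|K| = k`, these are independent events, one per bad node, of total probability
`x^k (1 - x)^(b - k)` with `x = (k + 1)/(n - 1)` and `b = |V_B|`. There are `C(b, k)` candidates,
and the Chernoff-type estimate `C(b, k) x^k (1 - x)^(b - k) ≤ a^k e^{(1/a - 1) b x}`, applied with
`b ≤ a (n - 1)` for a constant `a < 1`, bounds their contribution by `e (a e^{1 - a})^k`. Hence
`P(|T| > t) ≤ n e (a e^{1 - a})^t`, which is at most `n⁻³` once `t ≥ C log n`.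
-/

section UnifProb

variable {Ω : Type*} [Fintype Ω]

lemma unifProb_mono {P Q : Ω → Prop} (h : ∀ ω, P ω → Q ω) :
    unifProb P ≤ unifProb Q := by
  unfold unifProb
  gcongr
  exact h _

lemma unifProb_true [Nonempty Ω] : unifProb (fun _ : Ω => True) = 1 := by
  simp [unifProb]

lemma unifProb_not [Nonempty Ω] (P : Ω → Prop) :
    unifProb (fun ω => ¬ P ω) = 1 - unifProb P := by
  have hcard := card_filter_add_card_filter_not (s := (univ : Finset Ω)) P
  rw [card_univ] at hcard
  have hpos : (0 : ℝ) < Fintype.card Ω := by exact_mod_cast Fintype.card_pos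
  unfold unifProb
  rw [eq_sub_iff_add_eq, ← add_div, div_eq_one_iff_eq hpos.ne']
  norm_cast
  convert (add_comm _ _).trans hcard

lemma unifProb_le_sum {ι : Type*} {P : Ω → Prop} (I : Finset ι) (Q : ι → Ω → Prop)
    (h : ∀ ω, P ω → ∃ i ∈ I, Q i ω) : unifProb P ≤ ∑ i ∈ I, unifProb (Q i) := by
  unfold unifProb
  rw [← sum_div]
  gcongr
  have hsub : univ.filter P ⊆ I.biUnion fun i => univ.filter (Q i) := fun ω hω => by
    obtain ⟨i, hi, hQ⟩ := h ω (mem_filter.mp hω).2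
    exact mem_biUnion.mpr ⟨i, hi, mem_filter.mpr ⟨mem_univ ω, hQ⟩⟩
  exact_mod_cast (card_le_card hsub).trans card_biUnion_le

lemma unifProb_pi {ι : Type*} [Fintype ι] [DecidableEq ι] {α : ι → Type*}
    [∀ i, Fintype (α i)] (P : ∀ i, α i → Prop) :
    unifProb (fun ω : ∀ i, α i => ∀ i, P i (ω i)) = ∏ i, unifProb (P i) := by
  have hfilter : univ.filter (fun ω : ∀ i, α i => ∀ i, P i (ω i))
      = Fintype.piFinset fun i => univ.filter (P i) := by
    ext ω
    simp
  rw [unifProb, filter_congr_decidable, hfilter, Fintype.card_piFinset, Fintype.card_pi]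
  push_cast
  rw [← prod_div_distrib]
  simp only [unifProb]

end UnifProb

section UniformEquiv

variable {α β : Type*} [Fintype α] [Fintype β] [DecidableEq α] [DecidableEq β]

lemma card_filter_equiv_apply_eq (i : α) (x y : β) :
    #(univ.filter fun π : α ≃ β => π i = x)
      = #(univ.filter fun π : α ≃ β => π i = y) := by
  refine card_nbij' (fun π => π.trans (Equiv.swap x y)) (fun π => π.trans (Equiv.swap x y))
    ?_ ?_ ?_ ?_ <;> intro π hπ <;> simp_all [Equiv.ext_iff]

lemma unifProb_equiv_apply_mem (h : Fintype.card α = Fintype.card β) (i : α) (A : Finset β) :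
    unifProb (fun π : α ≃ β => π i ∈ A) = #A / Fintype.card β := by
  obtain ⟨π₀⟩ := Fintype.card_eq.mp h
  set c := #(univ.filter fun π : α ≃ β => π i = π₀ i)
  have hcount : ∀ A : Finset β, #(univ.filter fun π : α ≃ β => π i ∈ A) = #A * c := by
    intro A
    rw [card_eq_sum_card_fiberwise (f := fun π : α ≃ β => π i) (t := A)
      fun π hπ => by simpa using hπ]
    rw [sum_congr rfl fun y hy => ?_, sum_const, smul_eq_mul]
    rw [filter_filter]
    refine (congrArg card (filter_congr fun π _ => ?_)).trans
      (card_filter_equiv_apply_eq i y (π₀ i))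
    exact and_iff_right_of_imp fun hπ => hπ ▸ hy
  have hc : (c : ℝ) ≠ 0 := by
    exact_mod_cast (card_pos.mpr ⟨π₀, by simp⟩).ne'
  have htotal : Fintype.card (α ≃ β) = Fintype.card β * c := by
    rw [← card_univ, ← card_univ (α := β), ← hcount,
      filter_true_of_mem fun _ _ => mem_univ _]
  rw [unifProb, filter_congr_decidable, hcount, htotal]
  push_cast
  exact mul_div_mul_right _ _ hc

end UniformEquiv

lemma card_subtype_ne (n : ℕ) (d : Fin n) : Fintype.card {v : Fin n // v ≠ d} = n - 1 := by
  simp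

lemma nonempty_nodeOrder (n : ℕ) (d : Fin n) : Nonempty (NodeOrder n d) :=
  Fintype.card_eq.mp (by rw [Fintype.card_fin, card_subtype_ne])

lemma unifProb_firstElem_mem {n : ℕ} {d : Fin n} (hn : 2 ≤ n) {S : Finset (Fin n)}
    (hdS : d ∉ S) :
    unifProb (fun π : NodeOrder n d => firstElem π ∈ S) = #S / ((n : ℝ) - 1) := by
  have hfirst : ∀ π : NodeOrder n d,
      firstElem π ∈ S ↔ π ⟨0, by omega⟩ ∈ S.subtype (· ≠ d) := by
    intro π
    rw [firstElem, dif_pos (by omega), mem_subtype]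
  have hcard : #(S.subtype (· ≠ d)) = #S := by
    rw [card_subtype, filter_true_of_mem fun v hv => ne_of_mem_of_not_mem hv hdS]
  simp_rw [hfirst]
  rw [unifProb_equiv_apply_mem (by rw [Fintype.card_fin, card_subtype_ne]), hcard,
    card_subtype_ne, Nat.cast_sub (by omega), Nat.cast_one]

section Tree

variable {n : ℕ} (VB : Finset (Fin n)) (f : Fin n → Fin n) (w : Fin n)

lemma mem_layer_succ {i : ℕ} {v : Fin n} :
    v ∈ layer VB f w (i + 1) ↔
      v ∈ VB ∧ f v ∈ layer VB f w i ∧ v ∉ (layerAux VB f w i).2 :=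
  mem_filter

lemma mem_layerAux_snd {i : ℕ} {v : Fin n} :
    v ∈ (layerAux VB f w i).2 ↔ ∃ j ≤ i, v ∈ layer VB f w j := by
  induction i with
  | zero => simp [layerAux, layer]
  | succ i ih =>
    change v ∈ (layerAux VB f w i).2 ∪ layer VB f w (i + 1) ↔ _
    rw [mem_union, ih]
    constructor
    · rintro (⟨j, hj, hv⟩ | hv)
      exacts [⟨j, by omega, hv⟩, ⟨i + 1, le_rfl, hv⟩]
    · rintro ⟨j, hj, hv⟩
      rcases Nat.lt_or_eq_of_le hj with hj | rfl
      exacts [Or.inl ⟨j, by omega, hv⟩, Or.inr hv]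

lemma disjoint_layer {i j : ℕ} (hij : i < j) :
    Disjoint (layer VB f w i) (layer VB f w j) := by
  obtain ⟨j, rfl⟩ : ∃ k, j = k + 1 := ⟨j - 1, by omega⟩
  refine disjoint_left.mpr fun v hvi hvj => ?_
  exact ((mem_layer_succ VB f w).mp hvj).2.2
    ((mem_layerAux_snd VB f w).mpr ⟨i, by omega, hvi⟩)

def tree : Finset (Fin n) :=
  univ.filter fun v => ∃ i, v ∈ layer VB f w i

lemma sum_card_layer_le_card_tree (N : ℕ) :
    ∑ i ∈ range N, #(layer VB f w i) ≤ #(tree VB f w) := by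
  rw [← card_biUnion fun i _ j _ hij => ?_]
  · refine card_le_card fun v hv => ?_
    obtain ⟨i, -, hv⟩ := mem_biUnion.mp hv
    exact mem_filter.mpr ⟨mem_univ v, i, hv⟩
  · rcases Nat.lt_or_gt_of_ne hij with h | h
    exacts [disjoint_layer VB f w h, (disjoint_layer VB f w h).symm]

lemma root_mem_tree : w ∈ tree VB f w :=
  mem_filter.mpr ⟨mem_univ w, 0, mem_singleton_self w⟩

lemma tree_erase_root_subset : (tree VB f w).erase w ⊆ VB := by
  intro v hv
  obtain ⟨hvw, hv⟩ := mem_erase.mp hv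
  obtain ⟨i, hvi⟩ := (mem_filter.mp hv).2
  cases i with
  | zero => exact absurd (mem_singleton.mp hvi) hvw
  | succ i => exact ((mem_layer_succ VB f w).mp hvi).1

lemma apply_mem_tree_iff (hwB : w ∉ VB) {v : Fin n} (hv : v ∈ VB) :
    f v ∈ tree VB f w ↔ v ∈ tree VB f w := by
  simp only [tree, mem_filter, mem_univ, true_and]
  constructor
  · rintro ⟨i, hfv⟩
    by_cases hprev : v ∈ (layerAux VB f w i).2
    · obtain ⟨j, -, hvj⟩ := (mem_layerAux_snd VB f w).mp hprev
      exact ⟨j, hvj⟩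
    · exact ⟨i + 1, (mem_layer_succ VB f w).mpr ⟨hv, hfv, hprev⟩⟩
  · rintro ⟨i, hvi⟩
    cases i with
    | zero => exact absurd (mem_singleton.mp hvi ▸ hv) hwB
    | succ i => exact ⟨i, ((mem_layer_succ VB f w).mp hvi).2.1⟩

end Tree

lemma unifProb_forall_succG_mem_insert_iff {n : ℕ} {d : Fin n} (hn : 2 ≤ n)
    {VB K : Finset (Fin n)} {w : Fin n} (hd : d ∉ VB) (hw : w ≠ d) (hwB : w ∉ VB)
    (hK : K ⊆ VB) :
    unifProb (fun ω : Fin n → NodeOrder n d =>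
        ∀ v ∈ VB, (succG VB ω v ∈ insert w K ↔ v ∈ K))
      = ((#K + 1) / ((n : ℝ) - 1)) ^ #K * (1 - (#K + 1) / ((n : ℝ) - 1)) ^ (#VB - #K) := by
  have := nonempty_nodeOrder n d
  set p : ℝ := (#K + 1) / ((n : ℝ) - 1)
  have hp : unifProb (fun π : NodeOrder n d => firstElem π ∈ insert w K) = p := by
    rw [unifProb_firstElem_mem hn, card_insert_of_notMem fun h => hwB (hK h)]
    · push_cast; rfl
    · exact fun h => (mem_insert.mp h).elim (fun h => hw h.symm) fun h => hd (hK h)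
  have hfactor : ∀ v,
      unifProb (fun π : NodeOrder n d => v ∈ VB → (firstElem π ∈ insert w K ↔ v ∈ K))
        = if v ∈ VB then (if v ∈ K then p else 1 - p) else 1 := by
    intro v
    by_cases hvB : v ∈ VB
    · by_cases hvK : v ∈ K
      · simpa [hvB, hvK] using hp
      · simp only [hvB, hvK, true_implies, iff_false, if_true, if_false]
        rw [unifProb_not, hp]
    · simpa [hvB] using unifProb_true
  have hevent : ∀ ω : Fin n → NodeOrder n d,
      (∀ v ∈ VB, (succG VB ω v ∈ insert w K ↔ v ∈ K)) ↔
        ∀ v, v ∈ VB → (firstElem (ω v) ∈ insert w K ↔ v ∈ K) :=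
    fun ω => forall₂_congr fun v hv => by rw [succG, if_pos hv]
  simp_rw [hevent]
  rw [unifProb_pi (fun v π => v ∈ VB → (firstElem π ∈ insert w K ↔ v ∈ K)),
    prod_congr rfl fun v _ => hfactor v, prod_ite_mem, univ_inter, prod_ite, prod_const,
    prod_const, filter_mem_eq_inter, inter_eq_right.mpr hK, filter_not, filter_mem_eq_inter,
    inter_eq_right.mpr hK, card_sdiff_of_subset hK]

lemma choose_mul_pow_mul_pow_le_add_pow {x y : ℝ} (hx : 0 ≤ x) (hy : 0 ≤ y) {k b : ℕ}
    (hk : k ≤ b) : b.choose k * x ^ k * y ^ (b - k) ≤ (x + y) ^ b := by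
  rw [add_pow]
  calc (b.choose k : ℝ) * x ^ k * y ^ (b - k) = x ^ k * y ^ (b - k) * b.choose k := by ring
    _ ≤ _ := single_le_sum (f := fun m => x ^ m * y ^ (b - m) * b.choose m)
        (fun m _ => by positivity) (mem_range.mpr (by omega))

lemma choose_mul_pow_mul_one_sub_pow_le {x a : ℝ} (hx0 : 0 ≤ x) (hx1 : x ≤ 1) (ha : 0 < a)
    {k b : ℕ} (hk : k ≤ b) :
    b.choose k * x ^ k * (1 - x) ^ (b - k) ≤ a ^ k * Real.exp ((a⁻¹ - 1) * (b * x)) := by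
  have hterm := choose_mul_pow_mul_pow_le_add_pow (div_nonneg hx0 ha.le) (sub_nonneg.mpr hx1) hk
  have hexp : (x / a + (1 - x)) ^ b ≤ Real.exp ((a⁻¹ - 1) * (b * x)) :=
    calc (x / a + (1 - x)) ^ b ≤ Real.exp ((a⁻¹ - 1) * x) ^ b :=
          pow_le_pow_left₀ (add_nonneg (div_nonneg hx0 ha.le) (sub_nonneg.mpr hx1))
            ((by ring : x / a + (1 - x) = (a⁻¹ - 1) * x + 1).trans_le
              (Real.add_one_le_exp _)) b
      _ = _ := by rw [← Real.exp_nat_mul]; ring_nf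
  calc (b.choose k : ℝ) * x ^ k * (1 - x) ^ (b - k)
      = a ^ k * (b.choose k * (x / a) ^ k * (1 - x) ^ (b - k)) := by
        rw [div_pow]; field_simp
    _ ≤ _ := mul_le_mul_of_nonneg_left (hterm.trans hexp) (by positivity)

lemma choose_mul_pow_succ_div_le {a m : ℝ} (ha0 : 0 < a) (ha1 : a ≤ 1) {k b : ℕ}
    (hk : k ≤ b) (hkm : (k : ℝ) + 1 ≤ m) (hbm : (b : ℝ) ≤ a * m) :
    b.choose k * ((k + 1) / m) ^ k * (1 - (k + 1) / m) ^ (b - k)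
      ≤ Real.exp (1 - a) * (a * Real.exp (1 - a)) ^ k := by
  have hm : 0 < m := by linarith [(k.cast_nonneg : (0 : ℝ) ≤ k)]
  refine (choose_mul_pow_mul_one_sub_pow_le (by positivity) ((div_le_one hm).mpr hkm) ha0
    hk).trans ?_
  have hmean : (b : ℝ) * ((k + 1) / m) ≤ a * (k + 1) := by
    rw [mul_div_assoc', div_le_iff₀ hm]
    nlinarith
  have hrate : (a⁻¹ - 1) * (b * ((k + 1) / m)) ≤ (1 - a) * (k + 1) :=
    calc (a⁻¹ - 1) * (b * ((k + 1) / m)) ≤ (a⁻¹ - 1) * (a * (k + 1)) :=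
          mul_le_mul_of_nonneg_left hmean (sub_nonneg.mpr (one_le_inv₀ ha0 |>.mpr ha1))
      _ = (1 - a) * (k + 1) := by field_simp
  calc a ^ k * Real.exp ((a⁻¹ - 1) * (b * ((k + 1) / m)))
      ≤ a ^ k * Real.exp ((1 - a) * (k + 1)) := by gcongr
    _ = Real.exp (1 - a) * (a * Real.exp (1 - a)) ^ k := by
        rw [mul_pow, ← Real.exp_nat_mul, mul_add, mul_one, Real.exp_add]; ring_nf

lemma card_add_two_le_card {α : Type*} [Fintype α] {s : Finset α} {x y : α} (hxy : x ≠ y)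
    (hx : x ∉ s) (hy : y ∉ s) : #s + 2 ≤ Fintype.card α := by
  have hcard : #(insert x (insert y s)) = #s + 2 := by
    rw [card_insert_of_notMem (by simp [hxy, hx]), card_insert_of_notMem hy]
  exact hcard ▸ card_le_univ _

lemma mul_exp_one_sub_le_one (a : ℝ) : a * Real.exp (1 - a) ≤ 1 := by
  calc a * Real.exp (1 - a) ≤ Real.exp (a - 1) * Real.exp (1 - a) := by
        gcongr; linarith [Real.add_one_le_exp (a - 1)]
    _ = 1 := by rw [← Real.exp_add]; simp

theorem unifProb_lt_card_tree_le {n : ℕ} {d : Fin n} {VB : Finset (Fin n)} {w : Fin n}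
    (hd : d ∉ VB) (hw : w ≠ d) (hwB : w ∉ VB) {a : ℝ} (ha0 : 0 < a) (ha1 : a ≤ 1)
    (hb : (#VB : ℝ) ≤ a * ((n : ℝ) - 1)) (t : ℕ) :
    unifProb (fun ω : Fin n → NodeOrder n d => t < #(tree VB (succG VB ω) w))
      ≤ n * Real.exp (1 - a) * (a * Real.exp (1 - a)) ^ t := by
  have hbn : #VB + 2 ≤ n := by simpa using card_add_two_le_card hw hwB hd
  set g : ℕ → ℝ := fun k =>
    ((k + 1) / ((n : ℝ) - 1)) ^ k * (1 - (k + 1) / ((n : ℝ) - 1)) ^ (#VB - k)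
  have hcover : ∀ ω : Fin n → NodeOrder n d, t < #(tree VB (succG VB ω) w) →
      ∃ K ∈ VB.powerset.filter (t ≤ #·),
        ∀ v ∈ VB, (succG VB ω v ∈ insert w K ↔ v ∈ K) := by
    intro ω ht
    have hroot := root_mem_tree VB (succG VB ω) w
    refine ⟨(tree VB (succG VB ω) w).erase w, mem_filter.mpr ⟨?_, ?_⟩, fun v hv => ?_⟩
    · exact mem_powerset.mpr (tree_erase_root_subset VB _ w)
    · rw [card_erase_of_mem hroot]; omega
    · rw [insert_erase hroot, mem_erase, apply_mem_tree_iff VB _ w hwB hv]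
      exact (and_iff_right (ne_of_mem_of_not_mem hv hwB)).symm
  have hterm : ∀ k ∈ range (#VB + 1), (#VB).choose k • (if t ≤ k then g k else 0)
      ≤ Real.exp (1 - a) * (a * Real.exp (1 - a)) ^ t := by
    intro k hk
    have hk : k ≤ #VB := Nat.lt_succ_iff.mp (mem_range.mp hk)
    split_ifs with htk
    · have hkm : (k : ℝ) + 1 ≤ (n : ℝ) - 1 := by
        rw [le_sub_iff_add_le]; exact_mod_cast (by omega : k + 1 + 1 ≤ n)
      rw [nsmul_eq_mul, ← mul_assoc]
      refine (choose_mul_pow_succ_div_le ha0 ha1 hk hkm hb).trans ?_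
      exact mul_le_mul_of_nonneg_left
        (pow_le_pow_of_le_one (by positivity) (mul_exp_one_sub_le_one a) htk) (by positivity)
    · rw [smul_zero]; positivity
  calc _ ≤ ∑ K ∈ VB.powerset.filter (t ≤ #·), unifProb (fun ω : Fin n → NodeOrder n d =>
          ∀ v ∈ VB, (succG VB ω v ∈ insert w K ↔ v ∈ K)) :=
        unifProb_le_sum _ _ hcover
    _ = ∑ K ∈ VB.powerset, if t ≤ #K then g #K else 0 := by
        rw [sum_filter]
        refine sum_congr rfl fun K hK => ?_
        rw [unifProb_forall_succG_mem_insert_iff (by omega) hd hw hwB (mem_powerset.mp hK)]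
    _ = ∑ k ∈ range (#VB + 1), (#VB).choose k • (if t ≤ k then g k else 0) :=
        sum_powerset_apply_card fun k => if t ≤ k then g k else 0
    _ ≤ ∑ _k ∈ range (#VB + 1), Real.exp (1 - a) * (a * Real.exp (1 - a)) ^ t :=
        sum_le_sum hterm
    _ ≤ n * Real.exp (1 - a) * (a * Real.exp (1 - a)) ^ t := by
        rw [sum_const, card_range, nsmul_eq_mul, ← mul_assoc]
        gcongr
        exact_mod_cast (by omega : #VB + 1 ≤ n)

lemma log_le_lg {x : ℝ} (hx : 1 ≤ x) : Real.log x ≤ lg x := by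
  rw [lg, Real.logb, le_div_iff₀ (Real.log_pos one_lt_two)]
  nlinarith [Real.log_two_lt_d9, Real.log_nonneg hx]

lemma two_le_lg {x : ℝ} (hx : 4 ≤ x) : 2 ≤ lg x := by
  rw [lg, Real.le_logb_iff_rpow_le one_lt_two (by linarith)]
  norm_num
  exact hx

lemma one_le_lg_lg {x : ℝ} (hx : 4 ≤ x) : 1 ≤ lg (lg x) := by
  rw [lg, Real.le_logb_iff_rpow_le one_lt_two (by linarith [two_le_lg hx]), Real.rpow_one]
  exact two_le_lg hx

lemma sub_one_sub_log_pos {a : ℝ} (ha0 : 0 < a) (ha1 : a < 1) : 0 < a - 1 - Real.log a :=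
  sub_pos.mpr (Real.log_lt_sub_one_of_pos ha0 ha1.ne)

lemma mul_exp_mul_pow_floor_le {a : ℝ} (ha0 : 0 < a) (ha1 : a < 1) {x : ℝ} (hx : 4 ≤ x) :
    x * Real.exp (1 - a) *
        (a * Real.exp (1 - a)) ^ ⌊(5 / (a - 1 - Real.log a) + 1) * lg x * lg (lg x)⌋₊
      ≤ lg x / x ^ 3 := by
  set ℓ := a - 1 - Real.log a
  have hℓ : 0 < ℓ := sub_one_sub_log_pos ha0 ha1
  set X := (5 / ℓ + 1) * lg x * lg (lg x)
  set t := ⌊X⌋₊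
  have hlog : 1 ≤ Real.log x := by
    rw [Real.le_log_iff_exp_le (by linarith)]
    linarith [Real.exp_one_lt_d9]
  have hX : (5 / ℓ + 1) * Real.log x ≤ X := by
    have hlg := log_le_lg (by linarith : (1 : ℝ) ≤ x)
    have hlg0 : 0 ≤ lg x := by linarith [two_le_lg hx]
    calc (5 / ℓ + 1) * Real.log x ≤ (5 / ℓ + 1) * lg x := by gcongr
      _ ≤ X := le_mul_of_one_le_right (by positivity) (one_le_lg_lg hx)
  have hrate : 4 * Real.log x + (1 - a) - ℓ * t ≤ 0 := by
    have ht : X < t + 1 := Nat.lt_floor_add_one X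
    have hℓX : 5 * Real.log x + ℓ * Real.log x ≤ ℓ * X := by
      calc 5 * Real.log x + ℓ * Real.log x = ℓ * ((5 / ℓ + 1) * Real.log x) := by
            field_simp
        _ ≤ ℓ * X := by gcongr
    nlinarith
  have hρ : a * Real.exp (1 - a) = Real.exp (-ℓ) := by
    rw [show -ℓ = Real.log a + (1 - a) by ring, Real.exp_add, Real.exp_log ha0]
  have hx4 : x ^ 4 = Real.exp (4 * Real.log x) := by
    rw [show (4 : ℝ) = (4 : ℕ) by norm_num, Real.exp_nat_mul, Real.exp_log (by linarith)]
  have hpow : x ^ 3 * (x * Real.exp (1 - a) * (a * Real.exp (1 - a)) ^ t)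
      = Real.exp (4 * Real.log x + (1 - a) - ℓ * t) :=
    calc x ^ 3 * (x * Real.exp (1 - a) * (a * Real.exp (1 - a)) ^ t)
        = x ^ 4 * Real.exp (1 - a) * (a * Real.exp (1 - a)) ^ t := by ring
      _ = _ := by
        rw [hρ, hx4, ← Real.exp_nat_mul, ← Real.exp_add, ← Real.exp_add]
        ring_nf
  rw [le_div_iff₀ (by positivity), mul_comm, hpow]
  calc Real.exp (4 * Real.log x + (1 - a) - ℓ * t) ≤ Real.exp 0 := Real.exp_le_exp.mpr hrate
    _ ≤ lg x := by rw [Real.exp_zero]; linarith [two_le_lg hx]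

theorem tree_size_bound (ε : ℝ) (hε0 : 0 < ε) (hε1 : ε < 1) :
    ∃ (D p : ℝ) (N : ℕ), 0 < D ∧ 0 < p ∧
      ∀ n : ℕ, N ≤ n →
        ∀ (d : Fin n) (VB : Finset (Fin n)), d ∉ VB → (VB.card : ℝ) ≤ ε * n →
        ∀ w : Fin n, w ≠ d → w ∉ VB →
          1 - (lg n) ^ p / (n : ℝ) ^ 3 ≤
            unifProb (fun ω : Fin n → NodeOrder n d =>
              ((∑ i ∈ Finset.range (n + 2),
                  (layer VB (succG VB ω) w i).card : ℕ) : ℝ)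
                ≤ D * lg n * lg (lg n)) := by
  set a := (1 + ε) / 2 with ha
  have ha0 : 0 < a := by positivity
  have ha1 : a < 1 := by linarith
  have hℓ := sub_one_sub_log_pos ha0 ha1
  refine ⟨5 / (a - 1 - Real.log a) + 1, 1, ⌈2 / (1 - ε)⌉₊ + 4, by positivity, one_pos,
    fun n hn d VB hd hVB w hw hwB => ?_⟩
  have hn4 : (4 : ℝ) ≤ n := by exact_mod_cast (by omega : 4 ≤ n)
  have hb : (#VB : ℝ) ≤ a * ((n : ℝ) - 1) := by
    have hεn : 2 / (1 - ε) ≤ n := (Nat.le_ceil _).trans (by exact_mod_cast (by omega))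
    rw [div_le_iff₀ (by linarith)] at hεn
    rw [ha]
    linarith
  have := nonempty_nodeOrder n d
  set X := (5 / (a - 1 - Real.log a) + 1) * lg n * lg (lg n)
  have hX : 0 ≤ X := by
    have := two_le_lg hn4; have := one_le_lg_lg hn4; positivity
  have htail : unifProb (fun ω : Fin n → NodeOrder n d =>
      ¬ ((∑ i ∈ range (n + 2), #(layer VB (succG VB ω) w i) : ℕ) : ℝ) ≤ X)
        ≤ lg n / n ^ 3 :=
    calc _ ≤ unifProb fun ω : Fin n → NodeOrder n d =>
            ⌊X⌋₊ < #(tree VB (succG VB ω) w) :=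
          unifProb_mono fun ω hω => (Nat.floor_lt hX).mpr <| (not_le.mp hω).trans_le <|
            by exact_mod_cast sum_card_layer_le_card_tree VB _ w (n + 2)
      _ ≤ _ := unifProb_lt_card_tree_le hd hw hwB ha0 ha1.le hb _
      _ ≤ _ := mul_exp_mul_pow_floor_le ha0 ha1 hn4
  rw [Real.rpow_one]
  linarith [unifProb_not (fun ω : Fin n → NodeOrder n d =>
    ((∑ i ∈ range (n + 2), #(layer VB (succG VB ω) w i) : ℕ) : ℝ) ≤ X)]

end
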